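/- For patterns of size 2, the nonoverlapping support admits the explicit formula via greedy matching: sup(p_1 p_2, s) = the size of the greedy matching between A = {j : p_1 ⊆ s_j} and B = {j : p_2 ⊆ s_j} (both listed in increasing order), where the greedy matching pairs each element of A, in increasing order, with the smallest unused element of B strictly greater than it. -/

import Mathlib

/-- `IsOcc s p l` : `l` is an occurrence of pattern `p` in sequence `s`:
a strictly increasing list of indices into `s`, of the same length as `p`,
with coordinatewise containment of the pattern itemsets. -/
def IsOcc (s p : List (Finset ℕ)) (l : List ℕ) : Prop :=
  l.length = p.length ∧ l.Chain' (· < ·) ∧ (∀ x ∈ l, x < s.length) ∧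
  ∀ k, k < p.length → p.getD k ∅ ⊆ s.getD (l.getD k 0) ∅

/-- Two occurrences are nonoverlapping iff they differ at every coordinate. -/
def NonOverlap (l l' : List ℕ) : Prop :=
  ∀ k, k < l.length → l.getD k 0 ≠ l'.getD k 0

/-- `supp s p` : the maximum cardinality of a family of pairwise
nonoverlapping occurrences of `p` in `s`. -/
noncomputable def supp (s p : List (Finset ℕ)) : ℕ :=
  sSup {k | ∃ F : Finset (List ℕ), F.card = k ∧ (∀ l ∈ F, IsOcc s p l) ∧
    (F : Set (List ℕ)).Pairwise NonOverlap}

/-- Support of a pattern in a database: sum of supports over the sequences. -/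
noncomputable def suppD (D : List (List (Finset ℕ))) (p : List (Finset ℕ)) : ℕ :=
  (D.map (fun s => supp s p)).sum

/-- Greedy matching: scan `A` in order; match each element to the smallest
not-yet-used element of `B` exceeding it (for sorted `B`, `find?` returns
the smallest such element). -/
def greedyMatch : List ℕ → List ℕ → List (ℕ × ℕ)
  | [], _ => []
  | i :: A, B =>
    match B.find? (fun j => decide (i < j)) with
    | none => greedyMatch A B
    | some j => (i, j) :: greedyMatch A (B.erase j)

/-- A matching between `A` and `B`: pairs `(i, j)` with `i ∈ A`, `j ∈ B`,
`i < j`, with all first coordinates distinct and all second coordinates distinct. -/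
def IsMatching (A B : List ℕ) (M : Finset (ℕ × ℕ)) : Prop :=
  (∀ q ∈ M, q.1 ∈ A ∧ q.2 ∈ B ∧ q.1 < q.2) ∧
  Set.InjOn Prod.fst (M : Set (ℕ × ℕ)) ∧ Set.InjOn Prod.snd (M : Set (ℕ × ℕ))

/-! An occurrence of `p₁ p₂` is an edge `i < j` of the bipartite graph between the positions `A`
containing `p₁` and the positions `B` containing `p₂`, and a nonoverlapping family of occurrences
is exactly a matching of this graph, so the support is the maximum matching size. The
neighbourhoods `{b ∈ B | i < b}` are nested up-sets, hence matching any `i` to its least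
neighbour `j` is safe: if an optimal matching uses `(i, b)` and `(a, j)`, then `a < j ≤ b`, so
these two edges can be traded for `(a, b)` and `(i, j)`. Induction along `A` shows that the greedy
matching is maximum. -/

theorem List.le_of_find?_eq_some {α : Type*} [Preorder α] {p : α → Bool} {l : List α}
    (hl : l.Pairwise (· ≤ ·)) {a : α} (ha : l.find? p = some a) {b : α} (hb : b ∈ l)
    (hpb : p b) : a ≤ b := by
  obtain ⟨-, as, bs, rfl, has⟩ := List.find?_eq_some_iff_append.1 ha
  rcases List.mem_append.1 hb with hb | hb
  · simpa [hpb] using has b hb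
  · rcases List.mem_cons.1 hb with rfl | hb
    · exact le_rfl
    · exact (List.pairwise_cons.1 (List.pairwise_append.1 hl).2.1).1 b hb

theorem forall_mem_greedyMatch (A B : List ℕ) :
    ∀ q ∈ greedyMatch A B, q.1 ∈ A ∧ q.2 ∈ B ∧ q.1 < q.2 := by
  fun_induction greedyMatch A B with
  | case1 => simp
  | case2 i A B _ ih =>
    intro q hq
    obtain ⟨hqA, hqB, hlt⟩ := ih q hq
    exact ⟨List.mem_cons_of_mem _ hqA, hqB, hlt⟩
  | case3 i A B j hj ih =>
    rintro q (_ | ⟨_, hq⟩)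
    · exact ⟨List.mem_cons_self, List.mem_of_find?_eq_some hj, by simpa using List.find?_some hj⟩
    · obtain ⟨hqA, hqB, hlt⟩ := ih q hq
      exact ⟨List.mem_cons_of_mem _ hqA, List.erase_subset hqB, hlt⟩

theorem map_fst_greedyMatch_sublist (A B : List ℕ) :
    ((greedyMatch A B).map Prod.fst).Sublist A := by
  fun_induction greedyMatch A B with
  | case1 => simp
  | case2 i A B _ ih => exact ih.cons i
  | case3 i A B j _ ih => exact ih.cons_cons i

theorem nodup_map_snd_greedyMatch (A : List ℕ) {B : List ℕ} (hB : B.Nodup) :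
    ((greedyMatch A B).map Prod.snd).Nodup := by
  fun_induction greedyMatch A B with
  | case1 => simp
  | case2 i A B _ ih => exact ih hB
  | case3 i A B j _ ih =>
    refine List.nodup_cons.2 ⟨fun hj => ?_, ih (hB.erase j)⟩
    obtain ⟨q, hq, rfl⟩ := List.mem_map.1 hj
    exact hB.not_mem_erase (forall_mem_greedyMatch A (B.erase q.2) q hq).2.1

theorem nodup_greedyMatch {A : List ℕ} (B : List ℕ) (hA : A.Nodup) : (greedyMatch A B).Nodup :=
  ((map_fst_greedyMatch_sublist A B).nodup hA).of_map _

theorem isMatching_greedyMatch {A B : List ℕ} (hA : A.Nodup) (hB : B.Nodup) :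
    IsMatching A B (greedyMatch A B).toFinset := by
  simp only [IsMatching, List.coe_toFinset, List.mem_toFinset]
  exact ⟨forall_mem_greedyMatch A B,
    List.inj_on_of_nodup_map ((map_fst_greedyMatch_sublist A B).nodup hA),
    List.inj_on_of_nodup_map (nodup_map_snd_greedyMatch A hB)⟩

namespace IsMatching

variable {A B A' B' : List ℕ} {M N : Finset (ℕ × ℕ)}

theorem mono (hM : IsMatching A B M) (hNM : N ⊆ M) (hN : ∀ q ∈ N, q.1 ∈ A' ∧ q.2 ∈ B') :
    IsMatching A' B' N :=
  ⟨fun q hq => ⟨(hN q hq).1, (hN q hq).2, (hM.1 q (hNM hq)).2.2⟩,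
    hM.2.1.mono (Finset.coe_subset.2 hNM), hM.2.2.mono (Finset.coe_subset.2 hNM)⟩

theorem insert (hM : IsMatching A B M) {a b : ℕ} (ha : a ∈ A) (hb : b ∈ B) (hab : a < b)
    (hfresh : ∀ q ∈ M, q.1 ≠ a ∧ q.2 ≠ b) : IsMatching A B (insert (a, b) M) := by
  refine ⟨?_, ?_, ?_⟩
  · simp only [Finset.mem_insert, forall_eq_or_imp]
    exact ⟨⟨ha, hb, hab⟩, hM.1⟩
  · rw [Finset.coe_insert, Set.injOn_insert fun h => (hfresh _ h).1 rfl]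
    exact ⟨hM.2.1, fun ⟨q, hq, hqa⟩ => (hfresh q hq).1 hqa⟩
  · rw [Finset.coe_insert, Set.injOn_insert fun h => (hfresh _ h).1 rfl]
    exact ⟨hM.2.2, fun ⟨q, hq, hqb⟩ => (hfresh q hq).2 hqb⟩

theorem of_forall_not_lt {i : ℕ} (hM : IsMatching (i :: A) B M) (hi : ∀ b ∈ B, ¬ i < b) :
    IsMatching A B M :=
  hM.mono subset_rfl fun q hq => by
    obtain ⟨hqA, hqB, hlt⟩ := hM.1 q hq
    refine ⟨(List.mem_cons.1 hqA).resolve_left ?_, hqB⟩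
    rintro rfl
    exact hi _ hqB hlt

theorem exists_erase_card_le_succ {i j : ℕ} (hM : IsMatching (i :: A) B M)
    (hleast : ∀ b ∈ B, i < b → j ≤ b) :
    ∃ M', IsMatching A (B.erase j) M' ∧ M.card ≤ M'.card + 1 := by
  classical
  set M₀ := M.filter fun q => q.1 ≠ i ∧ q.2 ≠ j
  have hM₀ : IsMatching A (B.erase j) M₀ := hM.mono (Finset.filter_subset _ _) fun q hq => by
    obtain ⟨hqM, hqi, hqj⟩ := Finset.mem_filter.1 hq
    exact ⟨(List.mem_cons.1 (hM.1 q hqM).1).resolve_left hqi,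
      (List.mem_erase_of_ne hqj).2 (hM.1 q hqM).2.1⟩
  have hsplit : M₀.card + (M.filter fun q => ¬(q.1 ≠ i ∧ q.2 ≠ j)).card = M.card :=
    Finset.card_filter_add_card_filter_not _
  have hfst : ∀ q ∈ M, ∀ q' ∈ M, q.1 = q'.1 → q = q' := fun q hq q' hq' => hM.2.1 hq hq'
  have hsnd : ∀ q ∈ M, ∀ q' ∈ M, q.2 = q'.2 → q = q' := fun q hq q' hq' => hM.2.2 hq hq'
  by_cases hswap : ∃ a b, (i, b) ∈ M ∧ (a, j) ∈ M ∧ b ≠ j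
  · -- replace `(i, b)` and `(a, j)` by `(a, b)`, which is an edge because `a < j ≤ b`
    obtain ⟨a, b, hib, haj, hbj⟩ := hswap
    have hai : a ≠ i := fun h => hbj (congrArg Prod.snd (hfst _ hib _ haj h.symm))
    have hfresh : ∀ q ∈ M₀, q.1 ≠ a ∧ q.2 ≠ b := fun q hq => by
      obtain ⟨hqM, hqi, hqj⟩ := Finset.mem_filter.1 hq
      exact ⟨fun h => hqj (congrArg Prod.snd (hfst _ hqM _ haj h)),
        fun h => hqi (congrArg Prod.fst (hsnd _ hqM _ hib h))⟩
    refine ⟨_, hM₀.insert ((List.mem_cons.1 (hM.1 _ haj).1).resolve_left hai)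
      ((List.mem_erase_of_ne hbj).2 (hM.1 _ hib).2.1)
      ((hM.1 _ haj).2.2.trans_le (hleast b (hM.1 _ hib).2.1 (hM.1 _ hib).2.2)) hfresh, ?_⟩
    have hrest : (M.filter fun q => ¬(q.1 ≠ i ∧ q.2 ≠ j)) ⊆ {(i, b), (a, j)} := fun q hq => by
      obtain ⟨hqM, hq⟩ := Finset.mem_filter.1 hq
      rw [not_and_or, not_ne_iff, not_ne_iff] at hq
      rcases hq with hq | hq
      · simp [hfst _ hqM _ hib hq]
      · simp [hsnd _ hqM _ haj hq]
    have := (Finset.card_le_card hrest).trans Finset.card_le_two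
    rw [Finset.card_insert_of_notMem fun h => (hfresh _ h).1 rfl]
    omega
  · push Not at hswap
    have hcross : ∀ q ∈ M, ∀ q' ∈ M, q.1 = i → q'.2 = j → q = q' := fun q hq q' hq' hi hj =>
      hsnd _ hq _ hq' ((hswap q'.1 q.2 (by rw [← hi]; exact hq) (by rw [← hj]; exact hq')).trans
        hj.symm)
    refine ⟨M₀, hM₀, ?_⟩
    have hrest : (M.filter fun q => ¬(q.1 ≠ i ∧ q.2 ≠ j)).card ≤ 1 := by
      refine Finset.card_le_one.2 fun q hq q' hq' => ?_
      obtain ⟨hqM, hq⟩ := Finset.mem_filter.1 hq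
      obtain ⟨hqM', hq'⟩ := Finset.mem_filter.1 hq'
      rw [not_and_or, not_ne_iff, not_ne_iff] at hq hq'
      rcases hq with hq | hq <;> rcases hq' with hq' | hq'
      · exact hfst _ hqM _ hqM' (hq.trans hq'.symm)
      · exact hcross _ hqM _ hqM' hq hq'
      · exact (hcross _ hqM' _ hqM hq' hq).symm
      · exact hsnd _ hqM _ hqM' (hq.trans hq'.symm)
    omega

theorem card_le_length_greedyMatch (hB : B.Pairwise (· ≤ ·)) (hM : IsMatching A B M) :
    M.card ≤ (greedyMatch A B).length := by
  fun_induction greedyMatch A B generalizing M with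
  | case1 B =>
    rw [List.length_nil, Nat.le_zero, Finset.card_eq_zero, Finset.eq_empty_iff_forall_notMem]
    exact fun q hq => by simpa using (hM.1 q hq).1
  | case2 i A B hnone ih =>
    exact ih hB (hM.of_forall_not_lt fun b hb hib => by
      simpa [hib] using List.find?_eq_none.1 hnone b hb)
  | case3 i A B j hj ih =>
    obtain ⟨M', hM', hcard⟩ := hM.exists_erase_card_le_succ fun b hb hib =>
      List.le_of_find?_eq_some hB hj hb (by simpa using hib)
    exact hcard.trans (Nat.succ_le_succ (ih (hB.sublist List.erase_sublist) hM'))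

end IsMatching

theorem isGreatest_card_isMatching {A B : List ℕ} (hA : A.Nodup) (hB : B.Pairwise (· < ·)) :
    IsGreatest {k | ∃ M, IsMatching A B M ∧ M.card = k} (greedyMatch A B).length :=
  ⟨⟨_, isMatching_greedyMatch hA (hB.imp ne_of_lt),
      List.toFinset_card_of_nodup (nodup_greedyMatch B hA)⟩,
    fun _ ⟨_, hM, hk⟩ => hk ▸ hM.card_le_length_greedyMatch (hB.imp le_of_lt)⟩

def indicesContaining (s : List (Finset ℕ)) (p : Finset ℕ) : List ℕ :=
  (List.range s.length).filter fun j => decide (p ⊆ s.getD j ∅)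

theorem mem_indicesContaining {s : List (Finset ℕ)} {p : Finset ℕ} {j : ℕ} :
    j ∈ indicesContaining s p ↔ j < s.length ∧ p ⊆ s.getD j ∅ := by
  simp [indicesContaining]

theorem pairwise_lt_indicesContaining (s : List (Finset ℕ)) (p : Finset ℕ) :
    (indicesContaining s p).Pairwise (· < ·) :=
  List.pairwise_lt_range.sublist List.filter_sublist

theorem isOcc_pair {s : List (Finset ℕ)} {p₁ p₂ : Finset ℕ} {i j : ℕ} :
    IsOcc s [p₁, p₂] [i, j] ↔
      i ∈ indicesContaining s p₁ ∧ j ∈ indicesContaining s p₂ ∧ i < j := by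
  show _ ∧ List.IsChain _ _ ∧ _ ↔ _
  simp [mem_indicesContaining, Nat.le_one_iff_eq_zero_or_eq_one, or_imp, forall_and]
  tauto

theorem exists_eq_pair_of_isOcc {s : List (Finset ℕ)} {p₁ p₂ : Finset ℕ} {l : List ℕ}
    (hl : IsOcc s [p₁, p₂] l) : ∃ i j, l = [i, j] := by
  match l, hl.1 with
  | [i, j], _ => exact ⟨i, j, rfl⟩

theorem nonOverlap_pair {i j i' j' : ℕ} : NonOverlap [i, j] [i', j'] ↔ i ≠ i' ∧ j ≠ j' := by
  simp [NonOverlap, Nat.le_one_iff_eq_zero_or_eq_one, or_imp, forall_and]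

theorem list_pair_injective : Function.Injective fun q : ℕ × ℕ => [q.1, q.2] :=
  fun _ _ h => by simpa [Prod.ext_iff] using h

theorem isMatching_iff_image_pair {s : List (Finset ℕ)} {p₁ p₂ : Finset ℕ} {M : Finset (ℕ × ℕ)} :
    IsMatching (indicesContaining s p₁) (indicesContaining s p₂) M ↔
      (∀ l ∈ M.image fun q => [q.1, q.2], IsOcc s [p₁, p₂] l) ∧
        (↑(M.image fun q => [q.1, q.2]) : Set (List ℕ)).Pairwise NonOverlap := by
  rw [Finset.coe_image, list_pair_injective.injOn.pairwise_image]
  simp only [IsMatching, Finset.forall_mem_image, isOcc_pair, Set.injOn_iff_pairwise_ne,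
    Set.Pairwise, Function.onFun, nonOverlap_pair, ← imp_and, ← forall_and]

theorem setOf_card_nonOverlap_pair_eq (s : List (Finset ℕ)) (p₁ p₂ : Finset ℕ) :
    {k | ∃ F : Finset (List ℕ), F.card = k ∧ (∀ l ∈ F, IsOcc s [p₁, p₂] l) ∧
      (F : Set (List ℕ)).Pairwise NonOverlap} =
      {k | ∃ M, IsMatching (indicesContaining s p₁) (indicesContaining s p₂) M ∧ M.card = k} := by
  ext k
  constructor
  · rintro ⟨F, rfl, hocc, hpw⟩
    set M : Finset (ℕ × ℕ) := F.image fun l => (l.getD 0 0, l.getD 1 0)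
    have hF : M.image (fun q => [q.1, q.2]) = F := by
      rw [Finset.image_image]
      refine (Finset.image_congr fun l hl => ?_).trans Finset.image_id
      obtain ⟨i, j, rfl⟩ := exists_eq_pair_of_isOcc (hocc l hl)
      rfl
    refine ⟨M, isMatching_iff_image_pair.2 (by rw [hF]; exact ⟨hocc, hpw⟩), ?_⟩
    rw [← Finset.card_image_of_injective M list_pair_injective, hF]
  · rintro ⟨M, hM, rfl⟩
    exact ⟨_, Finset.card_image_of_injective _ list_pair_injective, isMatching_iff_image_pair.1 hM⟩

theorem stmt11 (s : List (Finset ℕ)) (p1 p2 : Finset ℕ) :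
    supp s [p1, p2] =
      (greedyMatch
        ((List.range s.length).filter (fun j => decide (p1 ⊆ s.getD j ∅)))
        ((List.range s.length).filter (fun j => decide (p2 ⊆ s.getD j ∅)))).length := by
  rw [supp, setOf_card_nonOverlap_pair_eq]
  exact (isGreatest_card_isMatching ((pairwise_lt_indicesContaining s p1).imp ne_of_lt)
    (pairwise_lt_indicesContaining s p2)).csSup_eq
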